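/- Let ℓ be a prime, r ≥ 1, and Π a closed subgroup of GL_r(ℤ_ℓ). For every n ≥ 1 and every U ∈ 𝒞_{n+1}(Π), the product U·Φ(Π(n-1)) is a subgroup of Π and belongs to 𝒞_n(Π); that is, the map ψ_n : 𝒞_{n+1}(Π) → 𝒞_n(Π), U ↦ U·Φ(Π(n-1)), is well defined. -/

import Mathlib

open Matrix

/-- Reduction modulo `ℓ ^ n` on `GL_r(ℤ_ℓ)`. -/
noncomputable def glRed (l : ℕ) [Fact (Nat.Prime l)] (r n : ℕ) :
    GL (Fin r) ℤ_[l] →* GL (Fin r) (ZMod (l ^ n)) :=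
  Matrix.GeneralLinearGroup.map (PadicInt.toZModPow n)

/-- `Π(n)`: the kernel of reduction modulo `ℓ ^ n` restricted to the closed subgroup `Π`,
viewed as a subgroup of `Π`. -/
noncomputable def levelSubgroup (l : ℕ) [Fact (Nat.Prime l)] (r : ℕ)
    (P : Subgroup (GL (Fin r) ℤ_[l])) (n : ℕ) : Subgroup ↥P :=
  ((glRed l r n).comp P.subtype).ker

/-- A maximal proper open subgroup of a topological group. -/
def IsMaximalOpenSubgroup {G : Type*} [Group G] [TopologicalSpace G] (U : Subgroup G) : Prop :=
  IsOpen (U : Set G) ∧ U ≠ ⊤ ∧ ∀ V : Subgroup G, IsOpen (V : Set G) → U < V → V = ⊤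

/-- The Frattini subgroup of a topological group: the intersection of all maximal proper
open subgroups. -/
def frattiniOpen (G : Type*) [Group G] [TopologicalSpace G] : Subgroup G :=
  sInf {U : Subgroup G | IsMaximalOpenSubgroup U}

/-- The Frattini subgroup of a subgroup `K`, viewed as a subgroup of the ambient group. -/
def frattiniOf {G : Type*} [Group G] [TopologicalSpace G] (K : Subgroup G) : Subgroup G :=
  (frattiniOpen ↥K).map K.subtype

/-- `𝒞_n(Π)`: the set of open subgroups `U ⊆ Π` with `Φ(Π(n-1)) ⊆ U` but `Π(n-1) ⊄ U`. -/
noncomputable def Cn (l : ℕ) [Fact (Nat.Prime l)] (r : ℕ)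
    (P : Subgroup (GL (Fin r) ℤ_[l])) (n : ℕ) : Set (Subgroup ↥P) :=
  {U | IsOpen (U : Set ↥P) ∧ frattiniOf (levelSubgroup l r P (n - 1)) ≤ U ∧
    ¬ levelSubgroup l r P (n - 1) ≤ U}

/-!
`Φ(Π(n-1))` is invariant under the continuous automorphisms of the normal subgroup `Π(n-1)`,
in particular under conjugation by `Π`, so it is normal in `Π` and `U·Φ(Π(n-1)) = U ⊔ Φ(Π(n-1))`
is a subgroup, open because it contains `U`. If it contained `Π(n-1)`, then `U ∩ Π(n-1)` and
`Φ(Π(n-1))` would generate `Π(n-1)`. As `Π` is closed in the compact group `GL_r(ℤ_ℓ)`, `Π(n-1)`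
is compact, so each of its proper open subgroups has finite index and lies in a maximal one;
hence the Frattini subgroup is non-generating, and `Π(n) ≤ Π(n-1) ≤ U`, contradicting
`U ∈ 𝒞_{n+1}(Π)`.
-/
theorem Subgroup.exists_le_isCoatom_of_finiteIndex {G : Type*} [Group G] (H : Subgroup G)
    [H.FiniteIndex] (hH : H ≠ ⊤) : ∃ M, H ≤ M ∧ IsCoatom M := by
  obtain ⟨M, ⟨hHM, hM⟩, hmin⟩ :=
    exists_minimalFor_of_wellFoundedLT (fun K : Subgroup G => H ≤ K ∧ K ≠ ⊤) Subgroup.index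
      ⟨H, le_rfl, hH⟩
  have : M.FiniteIndex := Subgroup.finiteIndex_of_le hHM
  refine ⟨M, hHM, hM, fun V hMV => by_contra fun hV => ?_⟩
  have hlt := Subgroup.index_strictAnti hMV
  exact hlt.not_ge (hmin ⟨hHM.trans hMV.le, hV⟩ hlt.le)

section Frattini

variable {G H : Type*} [Group G] [TopologicalSpace G] [IsTopologicalGroup G]
  [Group H] [TopologicalSpace H] [IsTopologicalGroup H]

theorem isMaximalOpenSubgroup_iff {M : Subgroup G} :
    IsMaximalOpenSubgroup M ↔ IsOpen (M : Set G) ∧ IsCoatom M :=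
  ⟨fun ⟨hopen, hne, hmax⟩ => ⟨hopen, hne, fun V hV => hmax V (Subgroup.isOpen_mono hV.le hopen) hV⟩,
    fun ⟨hopen, hne, hmax⟩ => ⟨hopen, hne, fun V _ hV => hmax V hV⟩⟩

theorem IsMaximalOpenSubgroup.comap {M : Subgroup H} (hM : IsMaximalOpenSubgroup M) {f : G →* H}
    (hf : Continuous f) (hsurj : Function.Surjective f) : IsMaximalOpenSubgroup (M.comap f) :=
  have ⟨hopen, hcoatom⟩ := isMaximalOpenSubgroup_iff.1 hM
  isMaximalOpenSubgroup_iff.2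
    ⟨hopen.preimage hf, Subgroup.isCoatom_comap_of_surjective hsurj hcoatom⟩

theorem map_frattiniOpen_le {f : G →* H} (hf : Continuous f) (hsurj : Function.Surjective f) :
    (frattiniOpen G).map f ≤ frattiniOpen H := by
  rintro _ ⟨x, hx, rfl⟩
  exact Subgroup.mem_sInf.2 fun M hM => Subgroup.mem_sInf.1 hx _ (hM.comap hf hsurj)

instance frattiniOf_normal (K : Subgroup G) [K.Normal] : (frattiniOf K).Normal where
  conj_mem := by
    rintro _ ⟨y, hy, rfl⟩ g
    let c := (MulAut.conjNormal g : K ≃* K).toMonoidHom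
    have hc : Continuous c := by
      refine continuous_induced_rng.2 ?_
      simp only [Function.comp_def, c, MulEquiv.coe_toMonoidHom, MulAut.conjNormal_apply]
      fun_prop
    exact ⟨c y, map_frattiniOpen_le hc (MulEquiv.surjective _) ⟨y, hy, rfl⟩,
      MulAut.conjNormal_apply g y⟩

theorem eq_top_of_sup_frattiniOpen_eq_top [CompactSpace G] {U : Subgroup G}
    (hU : IsOpen (U : Set G)) (h : U ⊔ frattiniOpen G = ⊤) : U = ⊤ := by
  by_contra hne
  have : U.FiniteIndex :=
    have := U.quotient_finite_of_isOpen hU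
    Subgroup.finiteIndex_of_finite_quotient
  obtain ⟨M, hUM, hM⟩ := U.exists_le_isCoatom_of_finiteIndex hne
  have hΦM : frattiniOpen G ≤ M :=
    sInf_le (isMaximalOpenSubgroup_iff.2 ⟨Subgroup.isOpen_mono hUM hU, hM⟩)
  exact hM.1 (top_le_iff.1 (h ▸ sup_le hUM hΦM))

open Pointwise in
theorem le_of_subset_mul_frattiniOf {K U : Subgroup G} [CompactSpace K]
    (hU : IsOpen (U : Set G)) (h : (K : Set G) ⊆ U * frattiniOf K) : K ≤ U := by
  suffices U.subgroupOf K = ⊤ from Subgroup.subgroupOf_eq_top.mp this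
  refine eq_top_of_sup_frattiniOpen_eq_top (hU.preimage continuous_subtype_val) (eq_top_iff.2 ?_)
  rintro ⟨z, hz⟩ -
  obtain ⟨u, hu, _, ⟨f, hf, rfl⟩, huf⟩ := h hz
  have huK : u ∈ K := by
    simpa [← huf] using K.mul_mem hz (K.inv_mem f.2)
  rw [show (⟨z, hz⟩ : K) = ⟨u, huK⟩ * f from Subtype.ext huf.symm]
  exact mul_mem (Subgroup.mem_sup_left (Subgroup.mem_subgroupOf.2 hu)) (Subgroup.mem_sup_right hf)

end Frattini

theorem PadicInt.continuous_toZModPow (p : ℕ) [Fact p.Prime] (n : ℕ) :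
    Continuous (PadicInt.toZModPow n : ℤ_[p] → ZMod (p ^ n)) := by
  refine continuous_of_continuousAt_zero (PadicInt.toZModPow n) ?_
  rw [ContinuousAt, map_zero, nhds_discrete (ZMod (p ^ n)), Filter.tendsto_pure]
  have hp : 0 < (p : ℝ) ^ (-(n : ℤ)) := zpow_pos (mod_cast (Fact.out : p.Prime).pos) _
  filter_upwards [Metric.closedBall_mem_nhds (0 : ℤ_[p]) hp] with x hx
  rw [← RingHom.mem_ker, PadicInt.ker_toZModPow, ← PadicInt.norm_le_pow_iff_mem_span_pow]
  simpa using hx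

instance Matrix.compactSpace {m n R : Type*} [TopologicalSpace R] [CompactSpace R] :
    CompactSpace (Matrix m n R) :=
  inferInstanceAs (CompactSpace (m → n → R))

section Level

variable (l : ℕ) [Fact (Nat.Prime l)] (r : ℕ) (P : Subgroup (GL (Fin r) ℤ_[l]))

theorem continuous_glRed (n : ℕ) : Continuous (glRed l r n) :=
  Continuous.units_map _ (continuous_id.matrix_map (PadicInt.continuous_toZModPow l n))

theorem levelSubgroup_isClosed (n : ℕ) : IsClosed (levelSubgroup l r P n : Set P) :=
  isClosed_singleton.preimage ((continuous_glRed l r n).comp continuous_subtype_val)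

instance levelSubgroup_normal (n : ℕ) : (levelSubgroup l r P n).Normal :=
  MonoidHom.normal_ker _

theorem levelSubgroup_antitone : Antitone (levelSubgroup l r P) := by
  intro m n h x hx
  rw [levelSubgroup, MonoidHom.mem_ker, MonoidHom.comp_apply] at hx ⊢
  have hcomp : glRed l r m = (Matrix.GeneralLinearGroup.map
      (ZMod.castHom (pow_dvd_pow l h) (ZMod (l ^ m)))).comp (glRed l r n) := by
    rw [glRed, glRed, ← Matrix.GeneralLinearGroup.map_comp,
      PadicInt.zmod_cast_comp_toZModPow m n h]
  rw [hcomp, MonoidHom.comp_apply, hx, map_one]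

end Level

open Pointwise in
theorem psi_well_defined_general (l : ℕ) [Fact (Nat.Prime l)] (r : ℕ)
    (P : Subgroup (GL (Fin r) ℤ_[l])) (hP : IsClosed (P : Set (GL (Fin r) ℤ_[l])))
    (n : ℕ) (U : Subgroup ↥P) (hU : U ∈ Cn l r P (n + 1)) :
    ∃ W : Subgroup ↥P,
      (W : Set ↥P) = (U : Set ↥P) * (frattiniOf (levelSubgroup l r P (n - 1)) : Set ↥P) ∧
      W ∈ Cn l r P n := by
  obtain ⟨hUopen, -, hKU⟩ := hU
  set K := levelSubgroup l r P (n - 1)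
  have : CompactSpace P := isCompact_iff_compactSpace.mp hP.isCompact
  have : CompactSpace K :=
    isCompact_iff_compactSpace.mp (levelSubgroup_isClosed l r P (n - 1)).isCompact
  refine ⟨U ⊔ frattiniOf K, Subgroup.mul_normal _ _, Subgroup.isOpen_mono le_sup_left hUopen,
    le_sup_right, fun hKW => hKU ?_⟩
  have hKsub : (K : Set P) ⊆ U * frattiniOf K := Subgroup.mul_normal U (frattiniOf K) ▸ hKW
  exact (levelSubgroup_antitone l r P (by omega)).trans (le_of_subset_mul_frattiniOf hUopen hKsub)

open Pointwise in
/-- The map `ψ_n : 𝒞_{n+1}(Π) → 𝒞_n(Π)`, `U ↦ U·Φ(Π(n-1))`, is well defined: for every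
`U ∈ 𝒞_{n+1}(Π)` the product `U·Φ(Π(n-1))` is a subgroup of `Π` belonging to `𝒞_n(Π)`. -/
theorem psi_well_defined (l : ℕ) [Fact (Nat.Prime l)] (r : ℕ)
    (P : Subgroup (GL (Fin r) ℤ_[l])) (hP : IsClosed (P : Set (GL (Fin r) ℤ_[l])))
    (n : ℕ) (hn : 1 ≤ n) (U : Subgroup ↥P) (hU : U ∈ Cn l r P (n + 1)) :
    ∃ W : Subgroup ↥P,
      (W : Set ↥P) = (U : Set ↥P) * (frattiniOf (levelSubgroup l r P (n - 1)) : Set ↥P) ∧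
      W ∈ Cn l r P n :=
  psi_well_defined_general l r P hP n U hU
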